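/- Let A ∈ ℂ^{2×2} be non-diagonalizable with eigenvalue λ, and write A = VJV⁻¹ where V = [[a,b],[c,d]] is invertible and J = [[λ,1],[0,λ]]. Then for every ε > 0, σ_ε(A) is exactly the open disk B(λ, |k|), where |k| = √(Cε + ε²) and C = (|a|² + |c|²)/|ad − bc|. -/

import Mathlib

/-!
The first column `(a, c)` of `V` spans the eigenline of `A`. Completing it to the orthonormal basis
`(a, c) / s`, `(-c̄, ā) / s` with `s² = |a|² + |c|²` puts `A` in Schur form `[[λ, k], [0, λ]]` with
`k = s² / (ad - bc)`. The pseudospectrum is invariant under unitary similarity and consists of the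
`z` for which `‖(z - T) x‖ < ε ‖x‖` for some `x`. For `T` upper triangular this reads
`|μp - kq|² + |μq|² < ε² (|p|² + |q|²)` with `μ = z - λ`; aligning the phases of `μp` and `kq`
reduces it to the real quadratic form `(|μ| P - |k| Q)² + |μ|² Q² - ε² (P² + Q²)`, which takes a
negative value exactly when `|μ|² < |k| ε + ε²`.
-/

open Matrix

/-- The operator norm of a matrix, induced by the Euclidean norm. -/
noncomputable def opNorm {n : Type*} [Fintype n] [DecidableEq n]
    (A : Matrix n n ℂ) : ℝ :=
  ‖Matrix.toEuclideanCLM (𝕜 := ℂ) A‖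

theorem ContinuousLinearMap.inv_lt_norm_iff_exists_norm_apply_lt {𝕜 E : Type*}
    [DenselyNormedField 𝕜] [NormedAddCommGroup E] [NormedSpace 𝕜 E] {f g : E →L[𝕜] E}
    (hfg : f * g = 1) (hgf : g * f = 1) {ε : ℝ} (hε : 0 < ε) :
    ε⁻¹ < ‖g‖ ↔ ∃ x, ‖f x‖ < ε * ‖x‖ := by
  constructor
  · intro h
    obtain ⟨y, hy, hgy⟩ := g.exists_lt_apply_of_lt_opNorm h
    refine ⟨g y, ?_⟩
    rw [← mul_apply_eq_comp, hfg, one_apply_eq_self]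
    calc ‖y‖ < 1 := hy
      _ = ε * ε⁻¹ := (mul_inv_cancel₀ hε.ne').symm
      _ < ε * ‖g y‖ := mul_lt_mul_of_pos_left hgy hε
  · rintro ⟨x, hx⟩
    by_contra! hg
    refine lt_irrefl ‖x‖ ?_
    calc ‖x‖ = ‖g (f x)‖ := by rw [← mul_apply_eq_comp, hgf, one_apply_eq_self]
      _ ≤ ‖g‖ * ‖f x‖ := g.le_opNorm _
      _ ≤ ε⁻¹ * ‖f x‖ := by gcongr
      _ < ε⁻¹ * (ε * ‖x‖) := by gcongr
      _ = ‖x‖ := by field_simp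

theorem exists_sq_sub_add_sq_lt_iff {t K ε : ℝ} (hK : 0 ≤ K) (hε : 0 < ε) :
    (∃ P Q : ℝ, (t * P - K * Q) ^ 2 + (t * Q) ^ 2 < ε ^ 2 * (P ^ 2 + Q ^ 2)) ↔
      t ^ 2 < K * ε + ε ^ 2 := by
  set a := t ^ 2 - ε ^ 2 with ha
  constructor
  · rintro ⟨P, Q, h⟩
    by_contra! hge
    have hgap : K * ε ≤ a := by linarith
    have hF : a * P ^ 2 - 2 * t * K * P * Q + (K ^ 2 + a) * Q ^ 2 < 0 := by linarith
    rcases hK.eq_or_lt with rfl | hKpos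
    · nlinarith [sq_nonneg P, sq_nonneg Q]
    · have hapos : 0 < a := lt_of_lt_of_le (mul_pos hKpos hε) hgap
      have hsq : (K * ε) ^ 2 ≤ a ^ 2 := pow_le_pow_left₀ (by positivity) hgap 2
      have hsos : a * (a * P ^ 2 - 2 * t * K * P * Q + (K ^ 2 + a) * Q ^ 2)
          = (a * P - t * K * Q) ^ 2 + (a ^ 2 - (K * ε) ^ 2) * Q ^ 2 := by ring
      nlinarith [sq_nonneg (a * P - t * K * Q), mul_nonneg (sub_nonneg.2 hsq) (sq_nonneg Q)]
  · intro h
    rcases lt_or_ge (t ^ 2) (ε ^ 2) with hlt | hge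
    · exact ⟨1, 0, by simpa using hlt⟩
    · have hgap : a < K * ε := by linarith
      have hKpos : 0 < K := by nlinarith
      refine ⟨K ^ 2 + a, t * K, ?_⟩
      have hval : (t * (K ^ 2 + a) - K * (t * K)) ^ 2 + (t * (t * K)) ^ 2
            - ε ^ 2 * ((K ^ 2 + a) ^ 2 + (t * K) ^ 2)
          = (K ^ 2 + a) * (a - K * ε) * (a + K * ε) := by rw [ha]; ring
      have : (K ^ 2 + a) * (a - K * ε) * (a + K * ε) < 0 :=
        mul_neg_of_neg_of_pos (mul_neg_of_pos_of_neg (by positivity) (by linarith))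
          (by positivity)
      linarith

namespace Complex

theorem exists_norm_mul_add_mul_eq (μ k : ℂ) (P Q : ℝ) :
    ∃ p q : ℂ, ‖p‖ = |P| ∧ ‖q‖ = |Q| ∧ ‖μ * p + k * q‖ = |‖μ‖ * P - ‖k‖ * Q| := by
  set e := exp ((k.arg - μ.arg : ℝ) * I)
  have he : exp (μ.arg * I) * e = exp (k.arg * I) := by
    rw [← exp_add]; push_cast; ring_nf
  have hsum : μ * (P * e) + k * -Q = ((‖μ‖ * P - ‖k‖ * Q : ℝ) : ℂ) * exp (k.arg * I) :=
    calc μ * (P * e) + k * -Q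
        = ‖μ‖ * exp (μ.arg * I) * (P * e) + ‖k‖ * exp (k.arg * I) * -Q := by
          rw [norm_mul_exp_arg_mul_I, norm_mul_exp_arg_mul_I]
      _ = _ := by push_cast; linear_combination (‖μ‖ * P : ℂ) * he
  refine ⟨P * e, -Q, ?_, by simp, ?_⟩
  · rw [norm_mul, norm_exp_ofReal_mul_I, norm_real, Real.norm_eq_abs, mul_one]
  · rw [hsum, norm_mul, norm_exp_ofReal_mul_I, mul_one, norm_real, Real.norm_eq_abs]

theorem exists_sq_norm_mul_add_mul_lt_iff (μ k : ℂ) (ε : ℝ) :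
    (∃ p q : ℂ, ‖μ * p + k * q‖ ^ 2 + ‖μ * q‖ ^ 2 < ε ^ 2 * (‖p‖ ^ 2 + ‖q‖ ^ 2)) ↔
      ∃ P Q : ℝ, (‖μ‖ * P - ‖k‖ * Q) ^ 2 + (‖μ‖ * Q) ^ 2 < ε ^ 2 * (P ^ 2 + Q ^ 2) := by
  constructor
  · rintro ⟨p, q, h⟩
    refine ⟨‖p‖, ‖q‖, lt_of_le_of_lt ?_ h⟩
    have : |‖μ * p‖ - ‖-(k * q)‖| ≤ ‖μ * p - -(k * q)‖ := abs_norm_sub_norm_le _ _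
    rw [sub_neg_eq_add, norm_neg, norm_mul, norm_mul] at this
    rw [norm_mul μ q]
    exact add_le_add_left (sq_le_sq' (abs_le.1 this).1 (abs_le.1 this).2) _
  · rintro ⟨P, Q, h⟩
    obtain ⟨p, q, hp, hq, hpq⟩ := exists_norm_mul_add_mul_eq μ k P Q
    refine ⟨p, q, ?_⟩
    rwa [hpq, norm_mul, hp, hq, sq_abs, mul_pow, sq_abs, sq_abs, ← mul_pow]

end Complex

theorem ne_zero_or_ne_zero_of_mul_sub_mul_ne_zero {R : Type*} [CommRing R] {a b c d : R}
    (h : a * d - b * c ≠ 0) : a ≠ 0 ∨ c ≠ 0 := by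
  by_contra! hac
  exact h (by rw [hac.1, hac.2]; ring)

namespace Matrix

variable {n : Type*} [Fintype n] [DecidableEq n]

def pseudospectrum (ε : ℝ) (A : Matrix n n ℂ) : Set ℂ :=
  {z | ¬ IsUnit (z • (1 : Matrix n n ℂ) - A) ∨ opNorm ((z • (1 : Matrix n n ℂ) - A)⁻¹) > 1 / ε}

theorem mem_pseudospectrum_iff {ε : ℝ} (hε : 0 < ε) {A : Matrix n n ℂ} {z : ℂ} :
    z ∈ pseudospectrum ε A ↔
      ∃ x, ‖toEuclideanCLM (𝕜 := ℂ) (z • 1 - A) x‖ < ε * ‖x‖ := by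
  change ¬IsUnit (z • 1 - A) ∨ opNorm (z • 1 - A)⁻¹ > 1 / ε ↔ _
  set M := z • (1 : Matrix n n ℂ) - A
  by_cases hM : IsUnit M
  · have hdet := (isUnit_iff_isUnit_det M).1 hM
    rw [gt_iff_lt, one_div, opNorm, or_iff_right (not_not.2 hM)]
    exact ContinuousLinearMap.inv_lt_norm_iff_exists_norm_apply_lt
      (by rw [← map_mul (toEuclideanCLM (𝕜 := ℂ) (n := n)), mul_nonsing_inv M hdet, map_one])
      (by rw [← map_mul (toEuclideanCLM (𝕜 := ℂ) (n := n)), nonsing_inv_mul M hdet, map_one]) hε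
  · have hdet : M.det = 0 := by rwa [isUnit_iff_isUnit_det, isUnit_iff_ne_zero, not_not] at hM
    obtain ⟨v, hv, hMv⟩ := exists_mulVec_eq_zero_iff.2 hdet
    refine iff_of_true (Or.inl hM) ⟨WithLp.toLp 2 v, ?_⟩
    simpa [hMv, hε] using hv

theorem pseudospectrum_unitary_conj {ε : ℝ} (hε : 0 < ε) {U : Matrix n n ℂ}
    (hU : U ∈ unitaryGroup n ℂ) (A : Matrix n n ℂ) :
    pseudospectrum ε (U * A * star U) = pseudospectrum ε A := by
  have hisom {V : Matrix n n ℂ} (hV : V ∈ unitaryGroup n ℂ) (x) :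
      ‖toEuclideanCLM (𝕜 := ℂ) V x‖ = ‖x‖ :=
    ContinuousLinearMap.norm_map_of_mem_unitary (Unitary.map_mem _ hV) x
  have hinv (x) : toEuclideanCLM (𝕜 := ℂ) (star U) (toEuclideanCLM (𝕜 := ℂ) U x) = x := by
    rw [← mul_apply_eq_comp, ← map_mul, Unitary.star_mul_self_of_mem hU, map_one,
      one_apply_eq_self]
  ext z
  have hconj : z • 1 - U * A * star U = U * (z • 1 - A) * star U := by
    rw [mul_sub, sub_mul, mul_smul_comm, mul_one, smul_mul_assoc, Unitary.mul_star_self_of_mem hU]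
  rw [mem_pseudospectrum_iff hε, mem_pseudospectrum_iff hε, hconj]
  simp only [map_mul, mul_apply_eq_comp, hisom hU]
  constructor
  · rintro ⟨x, hx⟩
    exact ⟨_, by rwa [hisom (Unitary.star_mem hU)]⟩
  · rintro ⟨y, hy⟩
    exact ⟨toEuclideanCLM (𝕜 := ℂ) U y, by rwa [hinv, hisom hU]⟩

theorem exists_norm_toEuclideanCLM_upperTriangular_lt_iff (α β γ : ℂ) {ε : ℝ} (hε : 0 ≤ ε) :
    (∃ x, ‖toEuclideanCLM (𝕜 := ℂ) !![α, β; 0, γ] x‖ < ε * ‖x‖) ↔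
      ∃ p q : ℂ, ‖α * p + β * q‖ ^ 2 + ‖γ * q‖ ^ 2 < ε ^ 2 * (‖p‖ ^ 2 + ‖q‖ ^ 2) := by
  have hnorm (x : EuclideanSpace ℂ (Fin 2)) : ‖x‖ ^ 2 = ‖x 0‖ ^ 2 + ‖x 1‖ ^ 2 := by
    simp [EuclideanSpace.norm_sq_eq, Fin.sum_univ_two]
  have hlt (x : EuclideanSpace ℂ (Fin 2)) :
      ‖toEuclideanCLM (𝕜 := ℂ) !![α, β; 0, γ] x‖ < ε * ‖x‖ ↔
        ‖α * x 0 + β * x 1‖ ^ 2 + ‖γ * x 1‖ ^ 2 < ε ^ 2 * (‖x 0‖ ^ 2 + ‖x 1‖ ^ 2) := by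
    rw [← pow_lt_pow_iff_left₀ (norm_nonneg _) (by positivity) two_ne_zero, mul_pow, hnorm, hnorm]
    simp [mulVec, dotProduct, Fin.sum_univ_two]
  constructor
  · rintro ⟨x, hx⟩
    exact ⟨x 0, x 1, (hlt x).1 hx⟩
  · rintro ⟨p, q, h⟩
    exact ⟨!₂[p, q], (hlt _).2 h⟩

theorem pseudospectrum_upperTriangular_fin_two {ε : ℝ} (hε : 0 < ε) (lam k : ℂ) :
    pseudospectrum ε !![lam, k; 0, lam] = Metric.ball lam (√(‖k‖ * ε + ε ^ 2)) := by
  ext z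
  have hsub : z • 1 - !![lam, k; 0, lam] = !![z - lam, -k; 0, z - lam] := by
    ext i j; fin_cases i <;> fin_cases j <;> simp
  rw [mem_pseudospectrum_iff hε, hsub, exists_norm_toEuclideanCLM_upperTriangular_lt_iff _ _ _
    hε.le, Complex.exists_sq_norm_mul_add_mul_lt_iff, norm_neg,
    exists_sq_sub_add_sq_lt_iff (norm_nonneg k) hε, Metric.mem_ball, Complex.dist_eq,
    Real.lt_sqrt (norm_nonneg _)]

def orthogonalCompletion (a c : ℂ) : Matrix (Fin 2) (Fin 2) ℂ :=
  !![a, -star c; c, star a]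

theorem orthogonalCompletion_mul_star (a c : ℂ) :
    orthogonalCompletion a c * star (orthogonalCompletion a c)
      = ((‖a‖ ^ 2 + ‖c‖ ^ 2 : ℝ) : ℂ) • 1 := by
  have ha := Complex.mul_conj' a
  have hc := Complex.mul_conj' c
  ext i j
  fin_cases i <;> fin_cases j <;>
    simp [orthogonalCompletion, mul_apply, Fin.sum_univ_two, star_eq_conjTranspose] <;>
    first | ring1 | linear_combination ha + hc

theorem jordan_conj_mul_orthogonalCompletion (a b c d lam : ℂ) (hdet : a * d - b * c ≠ 0) :
    !![a, b; c, d] * !![lam, 1; 0, lam] * (!![a, b; c, d])⁻¹ * orthogonalCompletion a c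
      = orthogonalCompletion a c *
          !![lam, ((‖a‖ ^ 2 + ‖c‖ ^ 2 : ℝ) : ℂ) / (a * d - b * c); 0, lam] := by
  have ha := Complex.mul_conj' a
  have hc := Complex.mul_conj' c
  have hdet' : a * d - c * b ≠ 0 := by rwa [mul_comm c b]
  rw [inv_def, adjugate_fin_two_of, det_fin_two_of, Ring.inverse_eq_inv']
  ext i j
  fin_cases i <;> fin_cases j <;> simp [orthogonalCompletion, mul_apply, Fin.sum_univ_two] <;>
    field_simp <;>
    first | ring1 | linear_combination a * (ha + hc) | linear_combination c * (ha + hc)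

noncomputable def unitaryCompletion (a c : ℂ) : Matrix (Fin 2) (Fin 2) ℂ :=
  ((√(‖a‖ ^ 2 + ‖c‖ ^ 2) : ℝ) : ℂ)⁻¹ • orthogonalCompletion a c

theorem unitaryCompletion_mem_unitaryGroup {a c : ℂ} (h : a ≠ 0 ∨ c ≠ 0) :
    unitaryCompletion a c ∈ unitaryGroup (Fin 2) ℂ := by
  have hs : 0 < ‖a‖ ^ 2 + ‖c‖ ^ 2 := by
    rcases h with h | h <;> positivity
  rw [mem_unitaryGroup_iff, unitaryCompletion, star_smul, smul_mul_smul_comm,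
    orthogonalCompletion_mul_star, smul_smul, star_inv₀, Complex.star_def, Complex.conj_ofReal,
    ← mul_inv, ← Complex.ofReal_mul, Real.mul_self_sqrt hs.le, ← Complex.ofReal_inv,
    ← Complex.ofReal_mul, inv_mul_cancel₀ hs.ne', Complex.ofReal_one, one_smul]

theorem jordan_conj_eq_unitaryCompletion_conj (a b c d lam : ℂ) (hdet : a * d - b * c ≠ 0) :
    !![a, b; c, d] * !![lam, 1; 0, lam] * (!![a, b; c, d])⁻¹
      = unitaryCompletion a c *
          !![lam, ((‖a‖ ^ 2 + ‖c‖ ^ 2 : ℝ) : ℂ) / (a * d - b * c); 0, lam] *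
          star (unitaryCompletion a c) := by
  have hac := ne_zero_or_ne_zero_of_mul_sub_mul_ne_zero hdet
  rw [← mul_one (_ * _ * _⁻¹), ← Unitary.mul_star_self_of_mem
    (unitaryCompletion_mem_unitaryGroup hac), ← mul_assoc, unitaryCompletion, Matrix.mul_smul,
    jordan_conj_mul_orthogonalCompletion a b c d lam hdet]
  simp only [smul_mul]

end Matrix

theorem pseudospectrum_two_by_two_nondiagonalizable
    (a b c d lam : ℂ) (hdet : a * d - b * c ≠ 0)
    (A : Matrix (Fin 2) (Fin 2) ℂ)
    (hA : A = !![a, b; c, d] * !![lam, 1; 0, lam] * (!![a, b; c, d])⁻¹)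
    (ε : ℝ) (hε : 0 < ε) :
    {z : ℂ | ¬ IsUnit (z • (1 : Matrix (Fin 2) (Fin 2) ℂ) - A) ∨
        opNorm ((z • (1 : Matrix (Fin 2) (Fin 2) ℂ) - A)⁻¹) > 1 / ε} =
      Metric.ball lam
        (Real.sqrt ((‖a‖ ^ 2 + ‖c‖ ^ 2) / ‖a * d - b * c‖ * ε
          + ε ^ 2)) := by
  have hk : ‖((‖a‖ ^ 2 + ‖c‖ ^ 2 : ℝ) : ℂ) / (a * d - b * c)‖
      = (‖a‖ ^ 2 + ‖c‖ ^ 2) / ‖a * d - b * c‖ := by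
    rw [norm_div, Complex.norm_of_nonneg (by positivity)]
  change pseudospectrum ε A = _
  rw [hA, jordan_conj_eq_unitaryCompletion_conj a b c d lam hdet,
    pseudospectrum_unitary_conj hε (unitaryCompletion_mem_unitaryGroup
      (ne_zero_or_ne_zero_of_mul_sub_mul_ne_zero hdet)),
    pseudospectrum_upperTriangular_fin_two hε, hk]
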